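/- Let r ≥ 3. The cylindrical r-wall Q_r contains the (r × r)-grid as a minor. -/

import Mathlib

/-- Adjacency of the cylindrical r-wall Q_r (1-based indices). -/
def QAdj (r : ℕ) (u v : ℕ × ℕ) : Prop :=
  1 ≤ u.1 ∧ u.1 ≤ r ∧ 1 ≤ u.2 ∧ u.2 ≤ 2*r ∧
  1 ≤ v.1 ∧ v.1 ≤ r ∧ 1 ≤ v.2 ∧ v.2 ≤ 2*r ∧
  ((u.1 = v.1 ∧ (v.2 = u.2 + 1 ∨ u.2 = v.2 + 1 ∨ (u.2 = 2*r ∧ v.2 = 1) ∨ (v.2 = 2*r ∧ u.2 = 1))) ∨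
   (u.2 = v.2 ∧ ((v.1 = u.1 + 1 ∧ (u.1 + u.2) % 2 = 0) ∨ (u.1 = v.1 + 1 ∧ (v.1 + v.2) % 2 = 0))))

/-- The cylindrical r-wall. -/
def Qgraph (r : ℕ) : SimpleGraph (ℕ × ℕ) where
  Adj := QAdj r
  symm := ⟨by rintro ⟨a,b⟩ ⟨c,d⟩ h; unfold QAdj at *; dsimp at *; omega⟩
  loopless := ⟨by rintro ⟨a,b⟩ h; unfold QAdj at h; dsimp at h; omega⟩

/-- Vertices of row k (the meridian cycle C_k). -/
def QRow (r k : ℕ) : Set (ℕ × ℕ) := {p | p.1 = k ∧ 1 ≤ p.2 ∧ p.2 ≤ 2*r}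

/-- Vertex set of Q_r. -/
def QVerts (r : ℕ) : Set (ℕ × ℕ) := {p | 1 ≤ p.1 ∧ p.1 ≤ r ∧ 1 ≤ p.2 ∧ p.2 ≤ 2*r}

/-- Adjacency of the (r × r)-grid (1-based indices). -/
def GridAdj (r : ℕ) (u v : ℕ × ℕ) : Prop :=
  1 ≤ u.1 ∧ u.1 ≤ r ∧ 1 ≤ u.2 ∧ u.2 ≤ r ∧
  1 ≤ v.1 ∧ v.1 ≤ r ∧ 1 ≤ v.2 ∧ v.2 ≤ r ∧
  ((u.1 = v.1 ∧ (v.2 = u.2 + 1 ∨ u.2 = v.2 + 1)) ∨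
   (u.2 = v.2 ∧ (v.1 = u.1 + 1 ∨ u.1 = v.1 + 1)))

/-- The (r × r)-grid graph. -/
def GridGraph (r : ℕ) : SimpleGraph (ℕ × ℕ) where
  Adj := GridAdj r
  symm := ⟨by rintro ⟨a,b⟩ ⟨c,d⟩ h; unfold GridAdj at *; dsimp at *; omega⟩
  loopless := ⟨by rintro ⟨a,b⟩ h; unfold GridAdj at h; dsimp at h; omega⟩

/-- Vertex set of the (r × r)-grid. -/
def GridVerts (r : ℕ) : Set (ℕ × ℕ) := {p | 1 ≤ p.1 ∧ p.1 ≤ r ∧ 1 ≤ p.2 ∧ p.2 ≤ r}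

lemma pair_connected {V : Type*} (G : SimpleGraph V) (a b : V) (h : G.Adj a b) :
    (G.induce {a, b}).Connected := by
  rw [SimpleGraph.connected_iff]
  refine ⟨?_, ⟨⟨a, by simp⟩⟩⟩
  intro x y
  have hx := x.2
  have hy := y.2
  simp only [Set.mem_insert_iff, Set.mem_singleton_iff] at hx hy
  have key : ∀ u v : ({a, b} : Set V), u.val = a → v.val = b → (G.induce {a, b}).Reachable u v := by
    intro u v hu hv
    refine SimpleGraph.Adj.reachable ?_
    show G.Adj u.val v.val
    rw [hu, hv]; exact h
  rcases hx with hx | hx <;> rcases hy with hy | hy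
  · cases Subtype.ext (hx.trans hy.symm); rfl
  · exact key x y hx hy
  · exact (key y x hy hx).symm
  · cases Subtype.ext (hx.trans hy.symm); rfl

/-- The cylindrical r-wall Q_r contains the (r × r)-grid as a minor:
there is a family of pairwise disjoint, nonempty, connected branch sets in Q_r,
one for each grid vertex, such that adjacent grid vertices have branch sets joined
by an edge of Q_r. -/
theorem Qgraph_contains_grid_minor (r : ℕ) (hr : 3 ≤ r) :
    ∃ B : ℕ × ℕ → Set (ℕ × ℕ),
      (∀ p ∈ GridVerts r, (B p).Nonempty) ∧
      (∀ p ∈ GridVerts r, B p ⊆ QVerts r) ∧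
      (∀ p ∈ GridVerts r, ((Qgraph r).induce (B p)).Connected) ∧
      (∀ p ∈ GridVerts r, ∀ q ∈ GridVerts r, p ≠ q → Disjoint (B p) (B q)) ∧
      (∀ p q, GridAdj r p q → ∃ x ∈ B p, ∃ y ∈ B q, (Qgraph r).Adj x y) := by
  refine ⟨fun p => {(p.1, 2*p.2 - 1), (p.1, 2*p.2)}, ?_, ?_, ?_, ?_, ?_⟩
  · intro p _; exact ⟨(p.1, 2*p.2 - 1), by simp⟩
  · rintro ⟨i,j⟩ hp x hx
    simp only [Set.mem_insert_iff, Set.mem_singleton_iff] at hx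
    simp only [GridVerts, Set.mem_setOf_eq] at hp
    rcases hx with h | h <;> subst h <;>
      simp only [QVerts, Set.mem_setOf_eq] <;> omega
  · rintro ⟨i,j⟩ hp
    simp only [GridVerts, Set.mem_setOf_eq] at hp
    apply pair_connected
    show QAdj r _ _
    unfold QAdj
    dsimp only
    omega
  · rintro ⟨i,j⟩ hp ⟨i',j'⟩ hq hne
    simp only [GridVerts, Set.mem_setOf_eq] at hp hq
    rw [Set.disjoint_iff_inter_eq_empty]
    ext ⟨a,b⟩
    simp only [Set.mem_inter_iff, Set.mem_insert_iff, Set.mem_singleton_iff,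
      Prod.mk.injEq, Set.mem_empty_iff_false, iff_false]
    have hne' : ¬(i = i' ∧ j = j') := by simpa [Prod.ext_iff] using hne
    omega
  · rintro ⟨i,j⟩ ⟨i',j'⟩ hadj
    unfold GridAdj at hadj
    dsimp only at hadj
    rcases hadj with ⟨h1,h2,h3,h4,h5,h6,h7,h8, (⟨hi, hj⟩ | ⟨hj, hi⟩)⟩
    · -- horizontal in the grid
      rcases hj with hj | hj
      · exact ⟨(i, 2*j), by simp, (i', 2*j' - 1), by simp, by
          show QAdj r _ _; unfold QAdj; dsimp only; omega⟩
      · exact ⟨(i, 2*j - 1), by simp, (i', 2*j'), by simp, by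
          show QAdj r _ _; unfold QAdj; dsimp only; omega⟩
    · -- vertical in the grid
      rcases hi with hi | hi
      · by_cases hpar : (i + (2*j - 1)) % 2 = 0
        · exact ⟨(i, 2*j - 1), by simp, (i', 2*j' - 1), by simp, by
            show QAdj r _ _; unfold QAdj; dsimp only; omega⟩
        · exact ⟨(i, 2*j), by simp, (i', 2*j'), by simp, by
            show QAdj r _ _; unfold QAdj; dsimp only; omega⟩
      · by_cases hpar : (i' + (2*j' - 1)) % 2 = 0
        · exact ⟨(i, 2*j - 1), by simp, (i', 2*j' - 1), by simp, by
            show QAdj r _ _; unfold QAdj; dsimp only; omega⟩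
        · exact ⟨(i, 2*j), by simp, (i', 2*j'), by simp, by
            show QAdj r _ _; unfold QAdj; dsimp only; omega⟩
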